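/- arXiv:2002.11604 — 2 statements merged into one kernel-verified Lean document; each statement's English description precedes it below -/
import Mathlib

section
/- Let P be a finite ordered set having an autonomous subset A which is an antichain with |A| ≥ 2. Then for any pair (x, y) of distinct elements of A, exactly half of the greedy linear extensions of P put x before y; in particular (x, y) is a 1/2-greedy balanced pair. -/
/-!
Because `A` is an autonomous antichain, the transposition of two of its elements `x, y` is an
order automorphism of `P`. Order isomorphisms carry greedy linear extensions to greedy linear
extensions, and relabelling a linear extension by the transposition exchanges the positions of
`x` and `y`; so it matches the greedy extensions with `x` before `y` bijectively with those
with `y` before `x`.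
-/

variable {α : Type*}

/-- `x` is a minimal element of the subposet induced on the finite set `s`. -/
def IsMinimalIn [PartialOrder α] (s : Finset α) (x : α) : Prop :=
  x ∈ s ∧ ∀ y ∈ s, ¬ y < x

/-- A valid greedy choice of the next element, given the previously chosen element `p`
(`none` at the start) and the set `s` of not-yet-chosen elements: the next element must
be minimal among the remaining elements and, moreover, if some element strictly above `p`
is minimal among the remaining elements, then the next element must be strictly above `p`
(i.e. it is a minimal element of `U(p)` that can extend the linear extension). -/
def GreedyNext [PartialOrder α] (p : Option α) (s : Finset α) (x : α) : Prop :=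
  IsMinimalIn s x ∧
    ∀ q : α, p = some q → (∃ v ∈ s, q < v ∧ IsMinimalIn s v) → q < x

/-- The list is a valid greedy enumeration of the finite set `s`, the previously chosen
element being `p` (`none` at the start). -/
def GreedyFrom [PartialOrder α] [DecidableEq α] :
    Option α → Finset α → List α → Prop
  | _, s, [] => s = ∅
  | p, s, x :: l => GreedyNext p s x ∧ GreedyFrom (some x) (s.erase x) l

/-- `l` is a greedy linear extension of the finite poset `α`, presented as the list of
its elements in increasing order. -/
def IsGreedyLE [PartialOrder α] [DecidableEq α] [Fintype α] (l : List α) : Prop :=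
  GreedyFrom (none : Option α) Finset.univ l

/-- `A` is an autonomous subset of the poset. -/
def IsAutonomous [PartialOrder α] (A : Set α) : Prop :=
  ∀ v ∉ A, ∀ a ∈ A, ∀ a' ∈ A, (v < a → v < a') ∧ (a < v → a' < v)

open Function

theorem List.idxOf_map_of_injective {β : Type*} [DecidableEq α] [DecidableEq β] {f : α → β}
    (hf : Injective f) (l : List α) (a : α) : (l.map f).idxOf (f a) = l.idxOf a := by
  simp only [List.idxOf, List.findIdx_map]
  congr
  funext b
  simp [hf.eq_iff]

section OrderIso

variable {β : Type*} [PartialOrder α] [PartialOrder β] (σ : α ≃o β)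

theorem OrderIso.isMinimalIn_image_iff [DecidableEq β] {s : Finset α} {x : α} :
    IsMinimalIn (s.image σ) (σ x) ↔ IsMinimalIn s x := by
  simp [IsMinimalIn, σ.injective.mem_finset_image]

theorem OrderIso.greedyNext_image_iff [DecidableEq β] {p : Option α} {s : Finset α} {x : α} :
    GreedyNext (p.map σ) (s.image σ) (σ x) ↔ GreedyNext p s x := by
  cases p <;> simp [GreedyNext, σ.isMinimalIn_image_iff]

theorem GreedyFrom.map [DecidableEq α] [DecidableEq β] {p : Option α} {s : Finset α}
    {l : List α} (h : GreedyFrom p s l) : GreedyFrom (p.map σ) (s.image σ) (l.map σ) := by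
  induction l generalizing p s with
  | nil => simp_all [GreedyFrom]
  | cons x l ih =>
    obtain ⟨hx, hl⟩ := h
    refine ⟨σ.greedyNext_image_iff.mpr hx, ?_⟩
    rw [← Finset.image_erase σ.injective]
    exact ih hl

theorem IsGreedyLE.map [DecidableEq α] [DecidableEq β] [Fintype α] [Fintype β] {l : List α}
    (h : IsGreedyLE l) : IsGreedyLE (l.map σ) := by
  simpa [IsGreedyLE, Finset.image_univ_of_surjective σ.surjective] using GreedyFrom.map σ h

end OrderIso

section GreedyFrom

variable [PartialOrder α] [DecidableEq α] {p : Option α} {s : Finset α} {l : List α}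

theorem GreedyFrom.toFinset_eq (h : GreedyFrom p s l) : l.toFinset = s := by
  induction l generalizing p s with
  | nil => exact h.symm
  | cons x l ih =>
    obtain ⟨⟨⟨hxs, -⟩, -⟩, hl⟩ := h
    rw [List.toFinset_cons, ih hl, Finset.insert_erase hxs]

theorem GreedyFrom.nodup (h : GreedyFrom p s l) : l.Nodup := by
  induction l generalizing p s with
  | nil => exact List.nodup_nil
  | cons x l ih =>
    obtain ⟨-, hl⟩ := h
    refine List.nodup_cons.mpr ⟨fun hx => ?_, ih hl⟩
    have := hl.toFinset_eq ▸ List.mem_toFinset.mpr hx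
    simp at this

variable [Fintype α]

theorem IsGreedyLE.mem (h : IsGreedyLE l) (a : α) : a ∈ l := by
  simp [← List.mem_toFinset, GreedyFrom.toFinset_eq h]

theorem finite_setOf_isGreedyLE : {l : List α | IsGreedyLE l}.Finite :=
  (List.finite_length_le α (Fintype.card α)).subset fun _ h => GreedyFrom.nodup h |>.length_le_card

end GreedyFrom

theorem ncard_sep_idxOf_lt_comm [DecidableEq α] {S : Set (List α)} (hS : S.Finite)
    {x y : α} (σ : α ≃ α) (hσx : σ x = y) (hσy : σ y = x) (hσS : ∀ l ∈ S, l.map σ ∈ S) :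
    {l ∈ S | l.idxOf x < l.idxOf y}.ncard = {l ∈ S | l.idxOf y < l.idxOf x}.ncard := by
  have hidx (l : List α) (a : α) : (l.map σ).idxOf (σ a) = l.idxOf a :=
    l.idxOf_map_of_injective σ.injective a
  have hswap {a b : α} (hab : σ a = b) (hba : σ b = a) :
      ∀ l ∈ {l ∈ S | l.idxOf a < l.idxOf b}, l.map σ ∈ {l ∈ S | l.idxOf b < l.idxOf a} := by
    rintro l ⟨hl, hlt⟩
    refine ⟨hσS l hl, ?_⟩
    rwa [← hidx l a, ← hidx l b, hab, hba] at hlt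
  have hinj : Injective (List.map σ) := List.map_injective_iff.mpr σ.injective
  exact le_antisymm
    (Set.ncard_le_ncard_of_injOn _ (hswap hσx hσy) hinj.injOn (hS.subset fun _ h => h.1))
    (Set.ncard_le_ncard_of_injOn _ (hswap hσy hσx) hinj.injOn (hS.subset fun _ h => h.1))

theorem two_mul_ncard_sep_idxOf_lt [DecidableEq α] {S : Set (List α)} (hS : S.Finite)
    {x y : α} (hxy : x ≠ y) (hx : ∀ l ∈ S, x ∈ l) (σ : α ≃ α) (hσx : σ x = y) (hσy : σ y = x)
    (hσS : ∀ l ∈ S, l.map σ ∈ S) :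
    2 * {l ∈ S | l.idxOf x < l.idxOf y}.ncard = S.ncard := by
  have hunion : {l ∈ S | l.idxOf x < l.idxOf y} ∪ {l ∈ S | l.idxOf y < l.idxOf x} = S := by
    ext l
    refine ⟨by rintro (h | h) <;> exact h.1, fun hl => ?_⟩
    have hne : l.idxOf x ≠ l.idxOf y := (List.idxOf_inj (hx l hl)).not.mpr hxy
    rcases hne.lt_or_gt with h | h
    exacts [Or.inl ⟨hl, h⟩, Or.inr ⟨hl, h⟩]
  have hdisj : Disjoint {l ∈ S | l.idxOf x < l.idxOf y} {l ∈ S | l.idxOf y < l.idxOf x} :=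
    Set.disjoint_left.mpr fun _ h h' => h.2.asymm h'.2
  rw [two_mul]
  nth_rw 2 [ncard_sep_idxOf_lt_comm hS σ hσx hσy hσS]
  rw [← Set.ncard_union_eq hdisj (hS.subset (Set.sep_subset _ _)) (hS.subset (Set.sep_subset _ _)),
    hunion]

theorem IsAutonomous.strictMono_swap [PartialOrder α] [DecidableEq α] {A : Set α}
    (hauto : IsAutonomous A) (hanti : IsAntichain (· ≤ ·) A) {x y : α} (hx : x ∈ A)
    (hy : y ∈ A) : StrictMono (Equiv.swap x y) := by
  have hfix {v : α} (hv : v ∉ A) : Equiv.swap x y v = v :=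
    Equiv.swap_apply_of_ne_of_ne (fun h => hv (h ▸ hx)) (fun h => hv (h ▸ hy))
  have hmaps {a : α} (ha : a ∈ A) : Equiv.swap x y a ∈ A := by
    rw [Equiv.swap_apply_def]
    split_ifs <;> assumption
  intro a b hab
  by_cases ha : a ∈ A <;> by_cases hb : b ∈ A
  · exact absurd hab.le (hanti ha hb hab.ne)
  · rw [hfix hb]
    exact (hauto b hb a ha _ (hmaps ha)).2 hab
  · rw [hfix ha]
    exact (hauto a ha b hb _ (hmaps hb)).1 hab
  · rwa [hfix ha, hfix hb]

theorem autonomous_antichain_half_general [Fintype α] [DecidableEq α] [PartialOrder α]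
    (A : Set α) (hauto : IsAutonomous A) (hanti : IsAntichain (· ≤ ·) A) :
    ∀ x ∈ A, ∀ y ∈ A, x ≠ y →
      2 * {l : List α | IsGreedyLE l ∧ l.idxOf x < l.idxOf y}.ncard
        = {l : List α | IsGreedyLE l}.ncard := by
  intro x hx y hy hxy
  have hmono : Monotone (Equiv.swap x y) := (hauto.strictMono_swap hanti hx hy).monotone
  let σ : α ≃o α := (Equiv.swap x y).toOrderIso hmono (by rwa [Equiv.symm_swap])
  exact two_mul_ncard_sep_idxOf_lt finite_setOf_isGreedyLE hxy (fun l hl => hl.mem x)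
    σ.toEquiv (Equiv.swap_apply_left x y) (Equiv.swap_apply_right x y) (fun l hl => hl.map σ)

/-- If a finite ordered set has an autonomous subset `A` which is an antichain with at
least two elements, then for any two distinct elements `x, y` of `A` exactly half of the
greedy linear extensions put `x` before `y`; in particular `(x, y)` is a `1/2`-greedy
balanced pair. -/
theorem autonomous_antichain_half [Fintype α] [DecidableEq α] [PartialOrder α]
    (A : Set α) (hauto : IsAutonomous A) (hanti : IsAntichain (· ≤ ·) A)
    (hcard : 2 ≤ A.ncard) :
    ∀ x ∈ A, ∀ y ∈ A, x ≠ y →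
      2 * {l : List α | IsGreedyLE l ∧ l.idxOf x < l.idxOf y}.ncard
        = {l : List α | IsGreedyLE l}.ncard :=
  autonomous_antichain_half_general A hauto hanti
end

section
/- Let P be a finite ordered set (not necessarily N-free) with a minimal element a such that a is not maximal in P and every upper cover of a in P is a minimal element of P ∖ {a}. Then the number of greedy linear extensions of P equals the number of greedy linear extensions of P ∖ {a}: |𝒢(P)| = |𝒢(P ∖ {a})|. -/
variable {α : Type*}

/-! Deleting `a` is a bijection from the greedy linear extensions of `P` onto those of
`P ∖ {a}`; its inverse puts `a` back immediately before the first element above `a` (one exists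
since `a` is not maximal). An element that becomes minimal once `a` is removed covers `a`, and
nothing but `a` lies below an upper cover of `a`; so removing `a` changes no greedy constraint
after an element `q ≠ a`, while after `a` the greedy rule must pick an upper cover of `a`, which
is minimal in `P ∖ {a}`. -/

section Erase

variable [PartialOrder α] [DecidableEq α] {a b q x y : α} {s : Finset α} {p : Option α}

theorem IsMinimalIn.erase (hx : IsMinimalIn s x) (hxa : x ≠ a) : IsMinimalIn (s.erase a) x :=
  ⟨Finset.mem_erase.2 ⟨hxa, hx.1⟩, fun y hy => hx.2 y (Finset.mem_of_mem_erase hy)⟩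

theorem IsMinimalIn.of_erase (hx : IsMinimalIn (s.erase a) x) (hax : ¬ a < x) :
    IsMinimalIn s x := by
  refine ⟨Finset.mem_of_mem_erase hx.1, fun y hy hyx => ?_⟩
  rcases eq_or_ne y a with rfl | hya
  · exact hax hyx
  · exact hx.2 y (Finset.mem_erase.2 ⟨hya, hy⟩) hyx

theorem IsMinimalIn.covBy_of_erase (hs : ∀ w, a ≤ w → w ∈ s)
    (hx : IsMinimalIn (s.erase a) x) (hax : a < x) : a ⋖ x :=
  ⟨hax, fun z haz hzx => hx.2 z (Finset.mem_erase.2 ⟨haz.ne', hs z haz.le⟩) hzx⟩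

theorem forall_le_mem_erase (hs : ∀ w, a ≤ w → w ∈ s) (hxa : x ≠ a) (hax : ¬ a < x) :
    ∀ w, a ≤ w → w ∈ s.erase x := fun w haw =>
  Finset.mem_erase.2 ⟨by rintro rfl; exact hax (haw.lt_of_ne hxa.symm), hs w haw⟩

/-- Removing `a` never creates a new minimal element above some `q ≠ a`: such an element would
cover `a`, and nothing but `a` lies below an upper cover of `a`. -/
theorem exists_minimal_above_erase_iff (hmin : IsMin a)
    (hcov : ∀ b : α, a ⋖ b → ∀ u : α, u ≠ a → ¬ u < b)
    (hs : ∀ w, a ≤ w → w ∈ s) (hqa : q ≠ a) :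
    (∃ v ∈ s, q < v ∧ IsMinimalIn s v) ↔
      ∃ v ∈ s.erase a, q < v ∧ IsMinimalIn (s.erase a) v := by
  constructor
  · rintro ⟨v, -, hqv, hv⟩
    have hva : v ≠ a := by rintro rfl; exact hmin.not_lt hqv
    exact ⟨v, (hv.erase hva).1, hqv, hv.erase hva⟩
  · rintro ⟨v, hvs, hqv, hv⟩
    by_cases hav : a < v
    · exact absurd hqv (hcov v (hv.covBy_of_erase hs hav) q hqa)
    · exact ⟨v, Finset.mem_of_mem_erase hvs, hqv, hv.of_erase hav⟩

theorem exists_minimal_above_self_erase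
    (hcov : ∀ b : α, a ⋖ b → ∀ u : α, u ≠ a → ¬ u < b)
    (hs : ∀ w, a ≤ w → w ∈ s) (hab : a < b) :
    ∃ v ∈ s.erase a, a < v ∧ IsMinimalIn (s.erase a) v := by
  classical
  obtain ⟨v, hv⟩ := Finset.exists_minimal (s := s.filter (a < ·)) ⟨b, by simpa using ⟨hs b hab.le, hab⟩⟩
  obtain ⟨hvs, hav⟩ := Finset.mem_filter.1 hv.prop
  have hcv : a ⋖ v := ⟨hav, fun z haz hzv =>
    hzv.not_ge (hv.2 (Finset.mem_filter.2 ⟨hs z haz.le, haz⟩) hzv.le)⟩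
  have hva : v ∈ s.erase a := Finset.mem_erase.2 ⟨hav.ne', hvs⟩
  exact ⟨v, hva, hav, hva, fun u hu => hcov v hcv u (Finset.ne_of_mem_erase hu)⟩

theorem greedyNext_iff_erase (hmin : IsMin a)
    (hcov : ∀ b : α, a ⋖ b → ∀ u : α, u ≠ a → ¬ u < b)
    (hs : ∀ w, a ≤ w → w ∈ s) (hp : p ≠ some a) (hxa : x ≠ a) :
    GreedyNext p s x ↔ GreedyNext p (s.erase a) x ∧ ¬ a < x := by
  have hforced : ∀ q, p = some q → ((∃ v ∈ s, q < v ∧ IsMinimalIn s v) ↔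
      ∃ v ∈ s.erase a, q < v ∧ IsMinimalIn (s.erase a) v) := fun q hq =>
    exists_minimal_above_erase_iff hmin hcov hs (by rintro rfl; exact hp hq)
  constructor
  · rintro ⟨hx, hxq⟩
    exact ⟨⟨hx.erase hxa, fun q hq h => hxq q hq ((hforced q hq).2 h)⟩, hx.2 a (hs a le_rfl)⟩
  · rintro ⟨⟨hx, hxq⟩, hax⟩
    exact ⟨hx.of_erase hax, fun q hq h => hxq q hq ((hforced q hq).1 h)⟩

theorem greedyNext_self_and_iff (hmin : IsMin a)
    (hcov : ∀ b : α, a ⋖ b → ∀ u : α, u ≠ a → ¬ u < b)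
    (hs : ∀ w, a ≤ w → w ∈ s) (hab : a < b) (hp : p ≠ some a) :
    GreedyNext p s a ∧ GreedyNext (some a) (s.erase a) y ↔
      GreedyNext p (s.erase a) y ∧ a < y := by
  have hqa : ∀ q, p = some q → q ≠ a := by rintro q hq rfl; exact hp hq
  constructor
  · rintro ⟨⟨-, haq⟩, hy, hya⟩
    refine ⟨⟨hy, fun q hq h => ?_⟩, hya a rfl (exists_minimal_above_self_erase hcov hs hab)⟩
    exact absurd (haq q hq ((exists_minimal_above_erase_iff hmin hcov hs (hqa q hq)).2 h))
      hmin.not_lt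
  · rintro ⟨⟨hy, hyq⟩, hay⟩
    refine ⟨⟨⟨hs a le_rfl, fun _ _ => hmin.not_lt⟩, fun q hq h => ?_⟩, hy, ?_⟩
    · exact absurd (hyq q hq ((exists_minimal_above_erase_iff hmin hcov hs (hqa q hq)).1 h))
        (hcov y (hy.covBy_of_erase hs hay) q (hqa q hq))
    · rintro q ⟨⟩ -
      exact hay

theorem GreedyFrom.mem : ∀ {l : List α} {p : Option α} {s : Finset α},
    GreedyFrom p s l → x ∈ l → x ∈ s
  | y :: _, _, _, h, hx => by
    rcases List.mem_cons.1 hx with rfl | hx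
    · exact h.1.1.1
    · exact Finset.mem_of_mem_erase (GreedyFrom.mem h.2 hx)

theorem GreedyFrom.nodup_s13 : ∀ {l : List α} {p : Option α} {s : Finset α},
    GreedyFrom p s l → l.Nodup
  | [], _, _, _ => List.nodup_nil
  | x :: _, _, _, h => List.nodup_cons.2
    ⟨fun hx => Finset.notMem_erase x _ (h.2.mem hx), h.2.nodup_s13⟩

open Classical in
noncomputable def insertBeforeFirstAbove (a : α) : List α → List α
  | [] => [a]
  | x :: l => if a < x then a :: x :: l else x :: insertBeforeFirstAbove a l

theorem erase_insertBeforeFirstAbove {m : List α} (hm : a ∉ m) :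
    (insertBeforeFirstAbove a m).erase a = m := by
  induction m with
  | nil => simp [insertBeforeFirstAbove]
  | cons x t ih =>
    have hxa : x ≠ a := by rintro rfl; exact hm List.mem_cons_self
    by_cases hax : a < x
    · rw [insertBeforeFirstAbove, if_pos hax, List.erase_cons_head]
    · rw [insertBeforeFirstAbove, if_neg hax, List.erase_cons_tail (by simpa using hxa),
        ih (fun h => hm (List.mem_cons_of_mem x h))]

theorem greedyFrom_insertBeforeFirstAbove_iff (hmin : IsMin a)
    (hcov : ∀ b : α, a ⋖ b → ∀ u : α, u ≠ a → ¬ u < b)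
    (hab : a < b) {m : List α} (hm : a ∉ m) :
    ∀ {p : Option α} {s : Finset α}, (∀ w, a ≤ w → w ∈ s) → p ≠ some a →
      (GreedyFrom p s (insertBeforeFirstAbove a m) ↔ GreedyFrom p (s.erase a) m) := by
  induction m with
  | nil =>
    intro p s hs _
    have hne : s.erase a ≠ ∅ := Finset.ne_empty_of_mem (Finset.mem_erase.2 ⟨hab.ne', hs b hab.le⟩)
    simp only [insertBeforeFirstAbove, GreedyFrom, hne, and_false]
  | cons x t ih =>
    intro p s hs hp
    have hxa : x ≠ a := by rintro rfl; exact hm List.mem_cons_self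
    by_cases hax : a < x
    · rw [insertBeforeFirstAbove, if_pos hax]
      simp only [GreedyFrom]
      rw [← and_assoc, greedyNext_self_and_iff hmin hcov hs hab hp]
      simp only [hax, and_true]
    · rw [insertBeforeFirstAbove, if_neg hax]
      simp only [GreedyFrom]
      rw [greedyNext_iff_erase hmin hcov hs hp hxa,
        ih (fun h => hm (List.mem_cons_of_mem x h)) (forall_le_mem_erase hs hxa hax)
          (by simpa using hxa), Finset.erase_right_comm]
      simp only [hax, not_false_eq_true, and_true]

theorem GreedyFrom.insertBeforeFirstAbove_erase
    (hcov : ∀ b : α, a ⋖ b → ∀ u : α, u ≠ a → ¬ u < b) (hab : a < b) {l : List α} :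
    ∀ {p : Option α} {s : Finset α}, GreedyFrom p s l →
      (∀ w, a ≤ w → w ∈ s) → insertBeforeFirstAbove a (l.erase a) = l := by
  induction l with
  | nil =>
    intro p s h hs
    exact absurd (hs a le_rfl) (by simp [show s = ∅ from h])
  | cons x t ih =>
    intro p s h hs
    rcases eq_or_ne x a with rfl | hxa
    · rw [List.erase_cons_head]
      cases t with
      | nil =>
        have hb : b ∈ s.erase x := Finset.mem_erase.2 ⟨hab.ne', hs b hab.le⟩
        simp [show s.erase x = ∅ from h.2] at hb
      | cons y t =>
        have hxy : x < y := h.2.1.2 x rfl (exists_minimal_above_self_erase hcov hs hab)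
        rw [insertBeforeFirstAbove, if_pos hxy]
    · have hax : ¬ a < x := h.1.1.2 a (hs a le_rfl)
      rw [List.erase_cons_tail (by simpa using hxa), insertBeforeFirstAbove, if_neg hax,
        ih h.2 (forall_le_mem_erase hs hxa hax)]

theorem ncard_greedyFrom_erase (hmin : IsMin a)
    (hcov : ∀ b : α, a ⋖ b → ∀ u : α, u ≠ a → ¬ u < b)
    (hs : ∀ w, a ≤ w → w ∈ s) (hab : a < b) (hp : p ≠ some a) :
    {l | GreedyFrom p s l}.ncard = {m | GreedyFrom p (s.erase a) m}.ncard := by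
  have hnotMem : ∀ {m}, GreedyFrom p (s.erase a) m → a ∉ m := fun hm ha =>
    Finset.notMem_erase a s (hm.mem ha)
  have himage : {l | GreedyFrom p s l} =
      insertBeforeFirstAbove a '' {m | GreedyFrom p (s.erase a) m} := by
    ext l
    constructor
    · intro hl
      have hl' := hl.insertBeforeFirstAbove_erase hcov hab hs
      refine ⟨l.erase a, ?_, hl'⟩
      rwa [Set.mem_ofPred_eq, ← greedyFrom_insertBeforeFirstAbove_iff hmin hcov hab
        hl.nodup_s13.not_mem_erase hs hp, hl']
    · rintro ⟨m, hm, rfl⟩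
      exact (greedyFrom_insertBeforeFirstAbove_iff hmin hcov hab (hnotMem hm) hs hp).2 hm
  refine himage ▸ Set.InjOn.ncard_image fun m₁ hm₁ m₂ hm₂ he => ?_
  rw [← erase_insertBeforeFirstAbove (hnotMem hm₁), ← erase_insertBeforeFirstAbove (hnotMem hm₂),
    he]

end Erase

section Map

variable {β : Type*} [PartialOrder α] [PartialOrder β] (f : β ↪o α)

theorem isMinimalIn_map_iff (s : Finset β) (x : β) :
    IsMinimalIn (s.map f.toEmbedding) (f x) ↔ IsMinimalIn s x := by
  simp only [IsMinimalIn, Finset.forall_mem_map]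
  simp

theorem greedyNext_map_iff (p : Option β) (s : Finset β) (x : β) :
    GreedyNext (p.map f) (s.map f.toEmbedding) (f x) ↔ GreedyNext p s x := by
  cases p <;> simp [GreedyNext, isMinimalIn_map_iff]

variable [DecidableEq α] [DecidableEq β]

theorem greedyFrom_map_iff {l : List β} :
    ∀ {p : Option β} {s : Finset β},
      GreedyFrom (p.map f) (s.map f.toEmbedding) (l.map f) ↔ GreedyFrom p s l := by
  induction l with
  | nil => simp [GreedyFrom]
  | cons x t ih =>
    intro p s
    simp only [List.map_cons, GreedyFrom]
    rw [greedyNext_map_iff, ← ih (p := some x), Finset.map_erase]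
    rfl

theorem ncard_greedyFrom_map (p : Option β) (s : Finset β) :
    {l : List α | GreedyFrom (p.map f) (s.map f.toEmbedding) l}.ncard =
      {l : List β | GreedyFrom p s l}.ncard := by
  have himage : {l : List α | GreedyFrom (p.map f) (s.map f.toEmbedding) l} =
      List.map f '' {l | GreedyFrom p s l} := by
    ext l
    constructor
    · intro hl
      have hrange : l ∈ Set.range (List.map f) := by
        rw [Set.range_list_map]
        intro x hx
        obtain ⟨y, -, rfl⟩ := Finset.mem_map.1 (hl.mem hx)
        exact ⟨y, rfl⟩
      obtain ⟨l', rfl⟩ := hrange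
      exact ⟨l', (greedyFrom_map_iff f).1 hl, rfl⟩
    · rintro ⟨l', hl', rfl⟩
      exact (greedyFrom_map_iff f).2 hl'
  rw [himage]
  exact (List.map_injective_iff.2 f.injective).injOn.ncard_image

end Map

/-- Let `P` be a finite ordered set with a minimal element `a` which is not maximal and
such that every upper cover of `a` is minimal in `P ∖ {a}`.  Then `P` and `P ∖ {a}` have
the same number of greedy linear extensions. -/
theorem card_greedy_erase_min [Fintype α] [DecidableEq α] [PartialOrder α]
    (a : α) (hmin : IsMin a) (hmax : ¬ IsMax a)
    (hcov : ∀ b : α, a ⋖ b → ∀ u : α, u ≠ a → ¬ u < b) :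
    {l : List α | IsGreedyLE l}.ncard =
      {l : List {z : α // z ≠ a} | IsGreedyLE l}.ncard := by
  obtain ⟨b, hab⟩ := not_isMax_iff.1 hmax
  have huniv : Finset.univ.map (OrderEmbedding.subtype (· ≠ a)).toEmbedding =
      Finset.univ.erase a := by
    ext x
    simp
  calc {l : List α | IsGreedyLE l}.ncard
      = {l | GreedyFrom none (Finset.univ.erase a) l}.ncard :=
        ncard_greedyFrom_erase hmin hcov (fun w _ => Finset.mem_univ w) hab (by simp)
    _ = {l : List {z : α // z ≠ a} | IsGreedyLE l}.ncard := by
        rw [← huniv]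
        exact ncard_greedyFrom_map (OrderEmbedding.subtype (· ≠ a)) none Finset.univ
end
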